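/- arXiv:1909.03946 — 2 statements merged into one kernel-verified Lean document; each statement's English description precedes it below -/
import Mathlib

section
/- Let v = (3,1,1,1,1,1,1,1) in the negative-definite E8 lattice, a primitive vector of norm −16. The roots of E8 orthogonal to v are exactly e_i − e_j with 2 ≤ i,j ≤ 8, i ≠ j, and there are exactly 42 such roots, forming a root system of type A6. -/
open scoped BigOperators

/-- Membership in the E8 lattice realized inside `ℚ^8`: all coordinates integral or all
coordinates in `ℤ + 1/2`, with even coordinate sum. -/
def inE8 (x : Fin 8 → ℚ) : Prop :=
  ((∀ i, ∃ n : ℤ, x i = n) ∨ (∀ i, ∃ n : ℤ, x i = n + 1/2)) ∧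
    ∃ m : ℤ, (∑ i, x i) = 2 * m

/-- The (negative definite) E8 bilinear form: negative of the standard inner product. -/
def e8Inner (x y : Fin 8 → ℚ) : ℚ := -∑ i, x i * y i

/-- A root of E8: a lattice vector of norm `-2`. -/
def IsE8Root (x : Fin 8 → ℚ) : Prop := inE8 x ∧ e8Inner x x = -2

/-- Standard basis vector of `ℚ^8`. -/
def stdBasis8 (j : Fin 8) : Fin 8 → ℚ := fun i => if i = j then 1 else 0

/-- `v` is a primitive vector of the E8 lattice. -/
def IsPrimitiveInE8 (v : Fin 8 → ℚ) : Prop :=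
  inE8 v ∧ ∀ (n : ℤ) (w : Fin 8 → ℚ), inE8 w → v = (n : ℚ) • w → IsUnit n

/-- The half-integral vector with entries `+1/2` on `S` and `-1/2` off `S`. -/
def deltaHalf (S : Finset (Fin 8)) : Fin 8 → ℚ := fun i => if i ∈ S then 1/2 else -1/2

/-- The roots of the standard A6 root lattice, realized inside `ℚ^7` as the integral
vectors of coordinate sum 0 and norm `-2` (negative definite convention). -/
def A6Roots : Set (Fin 7 → ℚ) :=
  {y | (∀ i, ∃ n : ℤ, y i = n) ∧ (∑ i, y i) = 0 ∧ (-∑ i, y i * y i) = -2}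

section Aux

open Finset

lemma aux_intCase (n : Fin 8 → ℤ) (hsq : ∑ i, n i * n i = 2)
    (horth : 2 * n 0 + ∑ i, n i = 0) :
    ∃ i j : Fin 8, 1 ≤ (i:ℕ) ∧ 1 ≤ (j:ℕ) ∧ i ≠ j ∧
      ∀ k, n k = (if k = i then 1 else 0) - (if k = j then 1 else 0) := by
  have habs : ∀ i, n i ≤ n i * n i ∧ -(n i) ≤ n i * n i := by
    intro i
    rcases lt_trichotomy (n i) 0 with h | h | h
    · have h' : n i ≤ -1 := by omega
      constructor <;> nlinarith
    · simp [h]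
    · have h' : 1 ≤ n i := by omega
      constructor <;> nlinarith
  have hb : ∀ i, n i = -1 ∨ n i = 0 ∨ n i = 1 := by
    intro i
    have h1 : n i * n i ≤ 2 := by
      have h2 := Finset.single_le_sum (f := fun i => n i * n i)
        (fun i _ => mul_self_nonneg (n i)) (mem_univ i)
      omega
    have h3 := habs i
    have hne2 : n i ≠ 2 := fun h => by rw [h] at h1; norm_num at h1
    have hnem2 : n i ≠ -2 := fun h => by rw [h] at h1; norm_num at h1
    have h31 := h3.1; have h32 := h3.2
    omega
  have hn0 : n 0 = 0 := by
    simp only [Fin.sum_univ_eight] at hsq horth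
    have h0 := habs 0; have h1 := habs 1; have h2 := habs 2; have h3 := habs 3
    have h4 := habs 4; have h5 := habs 5; have h6 := habs 6; have h7 := habs 7
    rcases hb 0 with h | h | h
    · exfalso; rw [h] at hsq horth; omega
    · exact h
    · exfalso; rw [h] at hsq horth; omega
  have hs0 : ∑ i, n i = 0 := by omega
  set S := Finset.univ.filter (fun i => n i = 1) with hS
  set T := Finset.univ.filter (fun i => n i = -1) with hT
  have hsum1 : ∑ i, n i * n i = (S.card : ℤ) + T.card := by
    have h1 : ∀ i ∈ Finset.univ, n i * n i
        = ((if n i = 1 then (1:ℤ) else 0) + (if n i = -1 then 1 else 0)) := by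
      intro i _; rcases hb i with h|h|h <;> simp [h]
    rw [Finset.sum_congr rfl h1, Finset.sum_add_distrib]
    simp [Finset.sum_boole, hS, hT]
  have hsum2 : ∑ i, n i = (S.card : ℤ) - T.card := by
    have h1 : ∀ i ∈ Finset.univ, n i
        = ((if n i = 1 then (1:ℤ) else 0) - (if n i = -1 then 1 else 0)) := by
      intro i _; rcases hb i with h|h|h <;> simp [h]
    rw [Finset.sum_congr rfl h1, Finset.sum_sub_distrib]
    simp [Finset.sum_boole, hS, hT]
  have hScard : S.card = 1 := by omega
  have hTcard : T.card = 1 := by omega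
  obtain ⟨i, hi⟩ := Finset.card_eq_one.mp hScard
  obtain ⟨j, hj⟩ := Finset.card_eq_one.mp hTcard
  have hni : n i = 1 := by
    have : i ∈ S := hi ▸ Finset.mem_singleton_self i
    simpa [hS] using this
  have hnj : n j = -1 := by
    have : j ∈ T := hj ▸ Finset.mem_singleton_self j
    simpa [hT] using this
  have hij : i ≠ j := fun h => by rw [h] at hni; omega
  have hi0 : i ≠ 0 := fun h => by rw [h] at hni; omega
  have hj0 : j ≠ 0 := fun h => by rw [h] at hnj; omega
  refine ⟨i, j, ?_, ?_, hij, ?_⟩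
  · have : (i : ℕ) ≠ 0 := fun h => hi0 (Fin.ext h)
    omega
  · have : (j : ℕ) ≠ 0 := fun h => hj0 (Fin.ext h)
    omega
  · intro k
    have hkS : k ∈ S ↔ k = i := by rw [hi]; exact Finset.mem_singleton
    have hkT : k ∈ T ↔ k = j := by rw [hj]; exact Finset.mem_singleton
    simp only [hS, hT, Finset.mem_filter, Finset.mem_univ, true_and] at hkS hkT
    rcases hb k with h|h|h
    · rw [if_neg (fun hk => by rw [hkT.mp h] at hk; exact hij hk.symm), if_pos (hkT.mp h)]
      omega
    · rw [if_neg (fun hk => by rw [hk] at h; omega), if_neg (fun hk => by rw [hk] at h; omega)]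
      omega
    · rw [if_pos (hkS.mp h), if_neg (fun hk => by rw [hkS.mp h] at hk; exact hij hk)]
      omega

lemma aux_v5 : (![3,1,1,1,1,1,1,1] : Fin 8 → ℚ) 5 = 1 := rfl
lemma aux_v6 : (![3,1,1,1,1,1,1,1] : Fin 8 → ℚ) 6 = 1 := rfl
lemma aux_v7 : (![3,1,1,1,1,1,1,1] : Fin 8 → ℚ) 7 = 1 := rfl
lemma aux_v2 : (![3,1,1,1,1,1,1,1] : Fin 8 → ℚ) 2 = 1 := rfl
lemma aux_v3 : (![3,1,1,1,1,1,1,1] : Fin 8 → ℚ) 3 = 1 := rfl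
lemma aux_v4 : (![3,1,1,1,1,1,1,1] : Fin 8 → ℚ) 4 = 1 := rfl

lemma aux_hv (δ : Fin 8 → ℚ) : ∑ i, δ i * (![3,1,1,1,1,1,1,1] : Fin 8 → ℚ) i
    = 3 * δ 0 + δ 1 + δ 2 + δ 3 + δ 4 + δ 5 + δ 6 + δ 7 := by
  rw [Fin.sum_univ_eight]; norm_num [aux_v2, aux_v3, aux_v4, aux_v5, aux_v6, aux_v7]; ring

lemma aux_vval : ∀ i : Fin 8, i ≠ 0 → (![3,1,1,1,1,1,1,1] : Fin 8 → ℚ) i = 1 := by decide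

lemma aux_vsucc : ∀ k : Fin 7, (![3,1,1,1,1,1,1,1] : Fin 8 → ℚ) k.succ = 1 := by decide

lemma aux_sum0 (i j : Fin 8) : ∑ k, (stdBasis8 i k - stdBasis8 j k) = 0 := by
  simp [Finset.sum_sub_distrib, stdBasis8]

lemma aux_sq2 (i j : Fin 8) (hij : i ≠ j) :
    ∑ k, (stdBasis8 i k - stdBasis8 j k) * (stdBasis8 i k - stdBasis8 j k) = 2 := by
  have hsq : ∀ k, (stdBasis8 i k - stdBasis8 j k) * (stdBasis8 i k - stdBasis8 j k)
      = (if k = i then 1 else 0) + (if k = j then 1 else 0) := by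
    intro k
    by_cases h1 : k = i <;> by_cases h2 : k = j <;>
      simp [stdBasis8, h1, h2] <;> simp_all
  simp only [hsq]
  rw [Finset.sum_add_distrib]
  simp
  norm_num

lemma aux_rootFacts (i j : Fin 8) (hi : i ≠ 0) (hj : j ≠ 0) (hij : i ≠ j) :
    IsE8Root (stdBasis8 i - stdBasis8 j) ∧
      e8Inner (stdBasis8 i - stdBasis8 j) (![3,1,1,1,1,1,1,1] : Fin 8 → ℚ) = 0 := by
  refine ⟨⟨⟨Or.inl fun k => ⟨(if k = i then 1 else 0) - (if k = j then 1 else 0), by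
      simp only [Pi.sub_apply, stdBasis8]; split_ifs <;> norm_num⟩, ⟨0, by
      simp [Pi.sub_apply, Finset.sum_sub_distrib, stdBasis8]⟩⟩, ?_⟩, ?_⟩
  · unfold e8Inner
    rw [show ∀ (f g : Fin 8 → ℚ), (f - g) = fun k => f k - g k from fun _ _ => rfl]
    simp only [aux_sq2 i j hij]
  · unfold e8Inner
    have h : ∀ k, ((stdBasis8 i - stdBasis8 j) k) * (![3,1,1,1,1,1,1,1] : Fin 8 → ℚ) k
        = (if k = i then (![3,1,1,1,1,1,1,1] : Fin 8 → ℚ) k else 0)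
          - (if k = j then (![3,1,1,1,1,1,1,1] : Fin 8 → ℚ) k else 0) := by
      intro k; simp [stdBasis8, sub_mul, ite_mul]
    simp only [h]
    rw [Finset.sum_sub_distrib]
    simp [Finset.sum_ite_eq' Finset.univ]
    rw [aux_vval i hi, aux_vval j hj]
    ring

lemma aux_stdInj {i j i' j' : Fin 8} (hij : i ≠ j) (hij' : i' ≠ j')
    (h : stdBasis8 i - stdBasis8 j = stdBasis8 i' - stdBasis8 j') : i = i' ∧ j = j' := by
  constructor
  · by_contra hne
    have h1 := congrFun h i
    simp [stdBasis8, hij, hne] at h1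
    split_ifs at h1 <;> norm_num at h1
  · by_contra hne
    have h2 := congrFun h j
    simp only [Pi.sub_apply, stdBasis8, if_pos rfl, if_neg hne] at h2
    split_ifs at h2 with ha hb <;> first | exact hij ha.symm | norm_num at h2

/-- The key classification: roots orthogonal to v are exactly the e_i - e_j, i,j ≥ 1. -/
lemma aux_setEq :
    {δ : Fin 8 → ℚ | IsE8Root δ ∧ e8Inner δ (![3,1,1,1,1,1,1,1] : Fin 8 → ℚ) = 0} =
      {δ : Fin 8 → ℚ | ∃ i j : Fin 8, 1 ≤ (i : ℕ) ∧ 1 ≤ (j : ℕ) ∧ i ≠ j ∧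
        δ = stdBasis8 i - stdBasis8 j} := by
  ext δ
  simp only [Set.mem_setOf_eq]
  constructor
  · rintro ⟨⟨⟨hcase, m, hm⟩, hnorm⟩, horth⟩
    have horthQ : 3 * δ 0 + δ 1 + δ 2 + δ 3 + δ 4 + δ 5 + δ 6 + δ 7 = 0 := by
      unfold e8Inner at horth
      rw [aux_hv δ] at horth
      linarith
    rw [Fin.sum_univ_eight] at hm
    rcases hcase with hint | hhalf
    · choose nn hn using hint
      have hnormQ : ∑ i, δ i * δ i = 2 := by unfold e8Inner at hnorm; linarith
      have hsqZ : ∑ i, nn i * nn i = 2 := by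
        have hc : ((∑ i, nn i * nn i : ℤ) : ℚ) = 2 := by
          push_cast
          rw [← hnormQ]
          exact Finset.sum_congr rfl fun i _ => by rw [hn i]
        exact_mod_cast hc
      have horthZ : 2 * nn 0 + ∑ i, nn i = 0 := by
        have hc : ((2 * nn 0 + ∑ i, nn i : ℤ) : ℚ) = 0 := by
          push_cast
          rw [Fin.sum_univ_eight, ← hn 0, ← hn 1, ← hn 2, ← hn 3, ← hn 4, ← hn 5,
            ← hn 6, ← hn 7]
          linarith
        exact_mod_cast hc
      obtain ⟨i, j, h1, h2, h3, h4⟩ := aux_intCase nn hsqZ horthZ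
      refine ⟨i, j, h1, h2, h3, funext fun k => ?_⟩
      rw [hn k, h4 k]
      by_cases hki : k = i <;> by_cases hkj : k = j <;>
        simp [stdBasis8, hki, hkj] <;> simp_all
    · exfalso
      choose nn hn using hhalf
      rw [hn 0, hn 1, hn 2, hn 3, hn 4, hn 5, hn 6, hn 7] at horthQ hm
      have h1Z : 3 * nn 0 + nn 1 + nn 2 + nn 3 + nn 4 + nn 5 + nn 6 + nn 7 = -5 := by
        have hc : ((3 * nn 0 + nn 1 + nn 2 + nn 3 + nn 4 + nn 5 + nn 6 + nn 7 : ℤ) : ℚ)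
            = -5 := by push_cast; linarith
        exact_mod_cast hc
      have h2Z : nn 0 + nn 1 + nn 2 + nn 3 + nn 4 + nn 5 + nn 6 + nn 7 = 2 * m - 4 := by
        have hc : ((nn 0 + nn 1 + nn 2 + nn 3 + nn 4 + nn 5 + nn 6 + nn 7 : ℤ) : ℚ)
            = 2 * m - 4 := by push_cast; linarith
        exact_mod_cast hc
      omega
  · rintro ⟨i, j, h1, h2, h3, rfl⟩
    have hi0 : i ≠ 0 := fun h => by rw [h] at h1; simp at h1
    have hj0 : j ≠ 0 := fun h => by rw [h] at h2; simp at h2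
    exact aux_rootFacts i j hi0 hj0 h3

def aux_phi : (Fin 7 → ℚ) →ₗ[ℚ] (Fin 8 → ℚ) where
  toFun y := fun i => Fin.cases 0 (fun k => y k) i
  map_add' x y := by
    funext i
    induction i using Fin.cases <;> simp
  map_smul' c x := by
    funext i
    induction i using Fin.cases <;> simp

end Aux

/-- for `v = (3,1,1,1,1,1,1,1)`, a primitive vector of norm `-16` in E8,
the roots of E8 orthogonal to `v` are exactly `e_i - e_j` with `2 ≤ i,j ≤ 8`, `i ≠ j`
(0-based: `1 ≤ i,j ≤ 7`); there are exactly 42 of them and they form a root system of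
type A6 (they are the isometric image of the roots of A6). -/
theorem stmt_6 :
    inE8 (![3,1,1,1,1,1,1,1] : Fin 8 → ℚ) ∧
    IsPrimitiveInE8 (![3,1,1,1,1,1,1,1] : Fin 8 → ℚ) ∧
    e8Inner (![3,1,1,1,1,1,1,1] : Fin 8 → ℚ) (![3,1,1,1,1,1,1,1] : Fin 8 → ℚ) = -16 ∧
    ({δ : Fin 8 → ℚ | IsE8Root δ ∧ e8Inner δ (![3,1,1,1,1,1,1,1] : Fin 8 → ℚ) = 0} =
      {δ : Fin 8 → ℚ | ∃ i j : Fin 8, 1 ≤ (i : ℕ) ∧ 1 ≤ (j : ℕ) ∧ i ≠ j ∧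
        δ = stdBasis8 i - stdBasis8 j}) ∧
    {δ : Fin 8 → ℚ | IsE8Root δ ∧ e8Inner δ (![3,1,1,1,1,1,1,1] : Fin 8 → ℚ) = 0}.ncard
      = 42 ∧
    (∃ φ : (Fin 7 → ℚ) →ₗ[ℚ] (Fin 8 → ℚ), Function.Injective φ ∧
      (∀ x y, e8Inner (φ x) (φ y) = -∑ i, x i * y i) ∧
      φ '' A6Roots =
        {δ : Fin 8 → ℚ | IsE8Root δ ∧
          e8Inner δ (![3,1,1,1,1,1,1,1] : Fin 8 → ℚ) = 0}) := by
  have hinE8v : inE8 (![3,1,1,1,1,1,1,1] : Fin 8 → ℚ) := by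
    refine ⟨Or.inl fun i => ?_, ⟨5, ?_⟩⟩
    · rcases eq_or_ne i 0 with h | h
      · exact ⟨3, by rw [h]; rfl⟩
      · exact ⟨1, by rw [aux_vval i h]; norm_num⟩
    · rw [Fin.sum_univ_eight]; norm_num [aux_v2, aux_v3, aux_v4, aux_v5, aux_v6, aux_v7]
  refine ⟨hinE8v, ⟨hinE8v, ?_⟩, ?_, aux_setEq, ?_, ?_⟩
  · -- primitivity
    intro n w hw hvw
    have h2 : (1:ℚ) = n * w 1 := by
      have := congrFun hvw 1
      simpa using this
    have hs : (10:ℚ) = n * (∑ i, w i) := by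
      have hsv : ∑ i, (![3,1,1,1,1,1,1,1] : Fin 8 → ℚ) i = 10 := by
        rw [Fin.sum_univ_eight]; norm_num [aux_v2, aux_v3, aux_v4, aux_v5, aux_v6, aux_v7]
      rw [← hsv, hvw]
      rw [Finset.mul_sum]
      exact Finset.sum_congr rfl fun i _ => by simp
    obtain ⟨m, hm⟩ := hw.2
    rcases hw.1 with hint | hhalf
    · obtain ⟨k, hk⟩ := hint 1
      rw [hk] at h2
      have : (1:ℤ) = n * k := by exact_mod_cast h2
      exact IsUnit.of_mul_eq_one k this.symm
    · obtain ⟨k, hk⟩ := hhalf 1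
      rw [hk] at h2
      have h2' : (2:ℚ) = n * (2*k+1) := by
        calc (2:ℚ) = 2 * (n * (k + 1/2)) := by rw [← h2]; norm_num
          _ = n * (2*k+1) := by ring
      have h2Z : (2:ℤ) = n * (2*k+1) := by exact_mod_cast h2'
      rw [hm] at hs
      have h5' : (5:ℚ) = n * m := by linear_combination hs / 2
      have h5Z : (5:ℤ) = n * m := by exact_mod_cast h5'
      have hone : n * (m - 2*(2*k+1)) = 1 := by linear_combination -h5Z + 2 * h2Z
      exact IsUnit.of_mul_eq_one _ hone
  · -- norm of v
    unfold e8Inner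
    rw [Fin.sum_univ_eight]
    norm_num [aux_v2, aux_v3, aux_v4, aux_v5, aux_v6, aux_v7]
  · -- ncard = 42
    rw [aux_setEq]
    classical
    have himg : {δ : Fin 8 → ℚ | ∃ i j : Fin 8, 1 ≤ (i : ℕ) ∧ 1 ≤ (j : ℕ) ∧ i ≠ j ∧
        δ = stdBasis8 i - stdBasis8 j} =
        ↑((Finset.univ.filter fun p : Fin 8 × Fin 8 =>
            1 ≤ (p.1 : ℕ) ∧ 1 ≤ (p.2 : ℕ) ∧ p.1 ≠ p.2).image
          fun p => stdBasis8 p.1 - stdBasis8 p.2) := by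
      ext δ
      simp only [Set.mem_setOf_eq, Finset.coe_image, Set.mem_image, Finset.mem_coe,
        Finset.mem_filter, Finset.mem_univ, true_and]
      constructor
      · rintro ⟨i, j, h1, h2, h3, rfl⟩
        exact ⟨(i, j), ⟨h1, h2, h3⟩, rfl⟩
      · rintro ⟨⟨i, j⟩, ⟨h1, h2, h3⟩, rfl⟩
        exact ⟨i, j, h1, h2, h3, rfl⟩
    rw [himg, Set.ncard_coe_finset]
    rw [Finset.card_image_of_injOn]
    · decide
    · intro p hp q hq h
      simp only [Finset.coe_filter, Set.mem_setOf_eq, Finset.mem_univ, true_and] at hp hq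
      obtain ⟨hii, hjj⟩ := aux_stdInj hp.2.2 hq.2.2 h
      exact Prod.ext hii hjj
  · -- the A6 isometry
    refine ⟨aux_phi, ?_, ?_, ?_⟩
    · intro x y h
      funext k
      have := congrFun h k.succ
      simpa [aux_phi] using this
    · intro x y
      unfold e8Inner
      rw [Fin.sum_univ_succ]
      simp [aux_phi]
    · ext δ
      simp only [Set.mem_image, Set.mem_setOf_eq]
      constructor
      · rintro ⟨y, ⟨hyint, hysum, hynorm⟩, rfl⟩
        have hphi0 : aux_phi y 0 = 0 := rfl
        have hphis : ∀ k : Fin 7, aux_phi y k.succ = y k := fun k => by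
          simp [aux_phi]
        refine ⟨⟨⟨Or.inl ?_, ⟨0, ?_⟩⟩, ?_⟩, ?_⟩
        · intro i
          induction i using Fin.cases with
          | zero => exact ⟨0, by simp [hphi0]⟩
          | succ k =>
            obtain ⟨n, hn⟩ := hyint k
            exact ⟨n, by rw [hphis k]; exact hn⟩
        · rw [Fin.sum_univ_succ, hphi0]
          rw [Finset.sum_congr rfl fun k _ => hphis k, hysum]
          norm_num
        · unfold e8Inner
          rw [Fin.sum_univ_succ, hphi0]
          simp only [hphis, zero_mul, zero_add]
          exact hynorm
        · unfold e8Inner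
          rw [Fin.sum_univ_succ, hphi0]
          simp only [hphis, aux_vsucc, mul_one, zero_mul, zero_add]
          rw [hysum]
          norm_num
      · intro hδ
        have h' := (Set.ext_iff.mp aux_setEq δ).mp hδ
        obtain ⟨i, j, h1, h2, h3, rfl⟩ := h'
        have hi0 : i ≠ 0 := fun h => by rw [h] at h1; simp at h1
        have hj0 : j ≠ 0 := fun h => by rw [h] at h2; simp at h2
        have h0 : stdBasis8 i 0 - stdBasis8 j 0 = 0 := by
          rw [show stdBasis8 i 0 = 0 from if_neg (fun h : (0:Fin 8) = i => hi0 h.symm),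
            show stdBasis8 j 0 = 0 from if_neg (fun h : (0:Fin 8) = j => hj0 h.symm)]
          norm_num
        refine ⟨fun k => stdBasis8 i k.succ - stdBasis8 j k.succ, ⟨?_, ?_, ?_⟩, ?_⟩
        · intro k
          refine ⟨(if k.succ = i then 1 else 0) - (if k.succ = j then 1 else 0), ?_⟩
          simp only [stdBasis8]
          split_ifs <;> norm_num
        · have hfull := aux_sum0 i j
          rw [Fin.sum_univ_succ, h0] at hfull
          simpa using hfull
        · have hfull := aux_sq2 i j h3
          rw [Fin.sum_univ_succ, h0] at hfull
          simp only [zero_mul, zero_add] at hfull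
          simp only [hfull]
        · funext x
          induction x using Fin.cases with
          | zero =>
            show (0:ℚ) = (stdBasis8 i - stdBasis8 j) 0
            rw [Pi.sub_apply, h0]
          | succ k =>
            show stdBasis8 i k.succ - stdBasis8 j k.succ = (stdBasis8 i - stdBasis8 j) k.succ
            rw [Pi.sub_apply]
end

section
/- Let v = (4,1,1,0,0,0,0,0) in the negative-definite E8 lattice, a primitive vector of norm −18. The roots of E8 orthogonal to v are exactly the vectors ±e_i ± e_j with 4 ≤ i < j ≤ 8 together with ±(e_2 − e_3), and there are exactly 42 such roots. -/
open scoped BigOperators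

/-! ### Auxiliary definitions and lemmas -/

def sgnQ (b : Bool) : ℚ := bif b then 1 else -1

lemma sgnQ_ne_zero (b : Bool) : sgnQ b ≠ 0 := by cases b <;> norm_num [sgnQ]

lemma sgnQ_inj {b b' : Bool} (h : sgnQ b = sgnQ b') : b = b' := by
  cases b <;> cases b' <;> simp [sgnQ] at h ⊢ <;> norm_num at h

lemma pv_apply (i j : Fin 8) (a b : ℚ) (k : Fin 8) :
    (a • stdBasis8 i + b • stdBasis8 j) k =
      (if k = i then a else 0) + (if k = j then b else 0) := by
  simp [stdBasis8, mul_ite]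

lemma sum_support_pair (f : Fin 8 → ℚ) {i j : Fin 8} (hij : i ≠ j)
    (h : ∀ k, k ≠ i → k ≠ j → f k = 0) : ∑ k, f k = f i + f j := by
  have h1 : ({i, j} : Finset (Fin 8)) ⊆ Finset.univ := Finset.subset_univ _
  have h2 := Finset.sum_subset h1 (fun k _ hk => by
    simp only [Finset.mem_insert, Finset.mem_singleton] at hk
    push_neg at hk
    exact h k hk.1 hk.2)
  rw [← h2, Finset.sum_pair hij]

lemma sq_vals {n : ℤ} (h : n * n ≤ 2) : n = -1 ∨ n = 0 ∨ n = 1 := by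
  have h1 : -1 ≤ n := by nlinarith
  have h2 : n ≤ 1 := by nlinarith
  omega

lemma vzero : ∀ k : Fin 8, 3 ≤ (k : ℕ) → (![4,1,1,0,0,0,0,0] : Fin 8 → ℚ) k = 0 := by
  intro k hk; fin_cases k <;> first | rfl | exact absurd hk (by norm_num)

lemma idx3 {n : Fin 8 → ℤ} (h0 : n 0 = 0) (h1 : n 1 = 0) (h2 : n 2 = 0)
    {i : Fin 8} (hi : n i ≠ 0) : 3 ≤ (i : ℕ) := by
  fin_cases i <;> simp_all

lemma pv_supp {i j : Fin 8} (hij : i < j) {a b : ℚ} (ha : a ≠ 0) (hb : b ≠ 0) (k : Fin 8) :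
    (a • stdBasis8 i + b • stdBasis8 j) k ≠ 0 ↔ (k = i ∨ k = j) := by
  rw [pv_apply]
  rcases eq_or_ne k i with rfl | h1
  · simp [hij.ne, ha]
  · rcases eq_or_ne k j with rfl | h2
    · simp [h1, hb]
    · simp [h1, h2]

lemma pv_inj {i j i' j' : Fin 8} {s t s' t' : Bool} (hij : i < j) (hij' : i' < j')
    (h : sgnQ s • stdBasis8 i + sgnQ t • stdBasis8 j
       = sgnQ s' • stdBasis8 i' + sgnQ t' • stdBasis8 j') :
    i = i' ∧ j = j' ∧ s = s' ∧ t = t' := by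
  have hsupp : ∀ k, (k = i ∨ k = j) ↔ (k = i' ∨ k = j') := by
    intro k
    rw [← pv_supp hij (sgnQ_ne_zero s) (sgnQ_ne_zero t) k,
        ← pv_supp hij' (sgnQ_ne_zero s') (sgnQ_ne_zero t') k, h]
  have hii : i = i' := by
    rcases (hsupp i).mp (Or.inl rfl) with h1 | h1
    · exact h1
    · rcases (hsupp i').mpr (Or.inl rfl) with h2 | h2
      · exact h2.symm
      · exfalso; rw [h2] at hij'; rw [h1] at hij; exact absurd (hij.trans hij') (lt_irrefl _)
  have hjj : j = j' := by
    rcases (hsupp j).mp (Or.inr rfl) with h1 | h1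
    · exact absurd (h1 ▸ hij) (by rw [hii]; exact lt_irrefl _)
    · exact h1
  subst hii; subst hjj
  have hi := congrFun h i
  have hj := congrFun h j
  rw [pv_apply, pv_apply] at hi hj
  simp [hij.ne, hij.ne'] at hi hj
  exact ⟨rfl, rfl, sgnQ_inj hi, sgnQ_inj hj⟩

def T8 : Finset (Fin 8 × Fin 8 × Bool × Bool) :=
  Finset.univ.filter (fun p => 3 ≤ (p.1 : ℕ) ∧ p.1 < p.2.1)

def F42 : Finset (Fin 8 → ℚ) :=
  (T8.image fun p => sgnQ p.2.2.1 • stdBasis8 p.1 + sgnQ p.2.2.2 • stdBasis8 p.2.1) ∪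
    {stdBasis8 1 - stdBasis8 2, stdBasis8 2 - stdBasis8 1}

lemma pv_one {i j : Fin 8} (hi3 : 3 ≤ (i:ℕ)) (hij : i < j) (a b : ℚ) :
    (a • stdBasis8 i + b • stdBasis8 j) 1 = 0 := by
  rw [pv_apply]
  have h1 : (1 : Fin 8) ≠ i := by intro h; rw [← h] at hi3; norm_num at hi3
  have h2 : (1 : Fin 8) ≠ j := by
    intro h
    have : 3 ≤ (j:ℕ) := le_of_lt (lt_of_le_of_lt hi3 hij)
    rw [← h] at this; norm_num at this
  simp [h1, h2]

lemma sb12_one : (stdBasis8 1 - stdBasis8 2) 1 = 1 := by norm_num [stdBasis8, Fin.ext_iff]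
lemma sb21_one : (stdBasis8 2 - stdBasis8 1) 1 = -1 := by norm_num [stdBasis8, Fin.ext_iff]

lemma F42_card : F42.card = 42 := by
  rw [F42, Finset.card_union_of_disjoint, Finset.card_image_of_injOn]
  · have hT : T8.card = 40 := by decide
    have hpair : ({stdBasis8 1 - stdBasis8 2, stdBasis8 2 - stdBasis8 1} :
        Finset (Fin 8 → ℚ)).card = 2 := by
      rw [Finset.card_insert_of_notMem, Finset.card_singleton]
      simp only [Finset.mem_singleton]
      intro h
      have := congrFun h 1
      rw [sb12_one, sb21_one] at this
      norm_num at this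
    rw [hT, hpair]
  · intro p hp q hq h
    simp only [Finset.mem_coe, T8, Finset.mem_filter] at hp hq
    obtain ⟨h1, h2, h3, h4⟩ := pv_inj hp.2.2 hq.2.2 h
    exact Prod.ext h1 (Prod.ext h2 (Prod.ext h3 h4))
  · rw [Finset.disjoint_left]
    intro x hx hx'
    simp only [Finset.mem_image, T8, Finset.mem_filter] at hx
    obtain ⟨p, ⟨-, hp3, hplt⟩, rfl⟩ := hx
    have h1 := pv_one hp3 hplt (sgnQ p.2.2.1) (sgnQ p.2.2.2)
    simp only [Finset.mem_insert, Finset.mem_singleton] at hx'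
    rcases hx' with h | h
    · rw [h, sb12_one] at h1; norm_num at h1
    · rw [h, sb21_one] at h1; norm_num at h1

lemma vA0 : (![4,1,1,0,0,0,0,0] : Fin 8 → ℚ) 0 = 4 := rfl
lemma vA1 : (![4,1,1,0,0,0,0,0] : Fin 8 → ℚ) 1 = 1 := rfl
lemma vA2 : (![4,1,1,0,0,0,0,0] : Fin 8 → ℚ) 2 = 1 := rfl
lemma vA3 : (![4,1,1,0,0,0,0,0] : Fin 8 → ℚ) 3 = 0 := rfl
lemma vA4 : (![4,1,1,0,0,0,0,0] : Fin 8 → ℚ) 4 = 0 := rfl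
lemma vA5 : (![4,1,1,0,0,0,0,0] : Fin 8 → ℚ) 5 = 0 := rfl
lemma vA6 : (![4,1,1,0,0,0,0,0] : Fin 8 → ℚ) 6 = 0 := rfl
lemma vA7 : (![4,1,1,0,0,0,0,0] : Fin 8 → ℚ) 7 = 0 := rfl

lemma partA : inE8 (![4,1,1,0,0,0,0,0] : Fin 8 → ℚ) := by
  constructor
  · left; intro i; fin_cases i
    exacts [⟨4, by norm_num [vA0]⟩, ⟨1, rfl⟩, ⟨1, rfl⟩, ⟨0, rfl⟩, ⟨0, rfl⟩, ⟨0, rfl⟩,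
      ⟨0, rfl⟩, ⟨0, rfl⟩]
  · exact ⟨3, by norm_num [Fin.sum_univ_eight, vA0, vA1, vA2, vA3, vA4, vA5, vA6, vA7]⟩

lemma partB : IsPrimitiveInE8 (![4,1,1,0,0,0,0,0] : Fin 8 → ℚ) := by
  refine ⟨partA, ?_⟩
  intro n w hw hvw
  have h1 : (1 : ℚ) = n * w 1 := by
    have := congrFun hvw 1; rw [vA1] at this; simpa using this
  have h0 : (4 : ℚ) = n * w 0 := by
    have := congrFun hvw 0; rw [vA0] at this; simpa using this
  rcases hw.1 with hint | hhalf
  · obtain ⟨m, hm⟩ := hint 1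
    rw [hm] at h1
    have : (1 : ℤ) = n * m := by exact_mod_cast h1
    exact IsUnit.of_mul_eq_one (a := n) m this.symm
  · obtain ⟨m1, hm1⟩ := hhalf 1
    obtain ⟨m0, hm0⟩ := hhalf 0
    rw [hm1] at h1; rw [hm0] at h0
    have e1 : (2 : ℚ) = (n : ℚ) * (2 * m1 + 1) := by linear_combination 2 * h1
    have e0 : (8 : ℚ) = (n : ℚ) * (2 * m0 + 1) := by linear_combination 2 * h0
    have e1' : (2 : ℤ) = n * (2 * m1 + 1) := by exact_mod_cast e1
    have e0' : (8 : ℤ) = n * (2 * m0 + 1) := by exact_mod_cast e0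
    have d6 : n * (m0 - m1) * 2 = 3 * 2 := by linear_combination e1' - e0'
    have d3 : n * (m0 - m1) = 3 := mul_right_cancel₀ two_ne_zero d6
    have hd2 : n ∣ 2 := ⟨2 * m1 + 1, e1'⟩
    have hd3 : n ∣ 3 := Dvd.intro _ d3
    have : n ∣ 1 := by
      have := dvd_sub hd3 hd2
      norm_num at this
      exact this
    exact isUnit_of_dvd_one this

lemma partC : e8Inner (![4,1,1,0,0,0,0,0] : Fin 8 → ℚ) (![4,1,1,0,0,0,0,0] : Fin 8 → ℚ)
    = -18 := by
  rw [e8Inner]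
  norm_num [Fin.sum_univ_eight, vA0, vA1, vA2, vA3, vA4, vA5, vA6, vA7]

lemma forward {δ : Fin 8 → ℚ} (h8 : inE8 δ) (hnorm : e8Inner δ δ = -2)
    (horth : e8Inner δ (![4,1,1,0,0,0,0,0] : Fin 8 → ℚ) = 0) :
    (∃ i j : Fin 8, 3 ≤ (i : ℕ) ∧ i < j ∧ ∃ a b : ℚ,
        (a = 1 ∨ a = -1) ∧ (b = 1 ∨ b = -1) ∧ δ = a • stdBasis8 i + b • stdBasis8 j) ∨
      δ = stdBasis8 1 - stdBasis8 2 ∨ δ = stdBasis8 2 - stdBasis8 1 := by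
  obtain ⟨hcoord, -⟩ := h8
  have hS : ∑ i, δ i * δ i = 2 := by
    have h : -∑ i, δ i * δ i = -2 := hnorm
    linarith
  have hO : 4 * δ 0 + δ 1 + δ 2 = 0 := by
    have h : -∑ i, δ i * (![4,1,1,0,0,0,0,0] : Fin 8 → ℚ) i = 0 := horth
    rw [Fin.sum_univ_eight, vA0, vA1, vA2, vA3, vA4, vA5, vA6, vA7] at h
    linarith
  rcases hcoord with hint | hhalf
  · -- integral case
    choose n hn using hint
    have hSZ : (∑ i, n i * n i) = (2:ℤ) := by
      have h : ((∑ i, n i * n i : ℤ) : ℚ) = 2 := by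
        push_cast
        rw [← hS]
        exact Finset.sum_congr rfl (fun i _ => by rw [hn i])
      exact_mod_cast h
    have hb : ∀ i, n i = -1 ∨ n i = 0 ∨ n i = 1 := by
      intro i
      refine sq_vals ?_
      calc n i * n i ≤ ∑ k, n k * n k :=
            Finset.single_le_sum (f := fun k => n k * n k)
              (fun k _ => mul_self_nonneg _) (Finset.mem_univ i)
        _ = 2 := hSZ
    have hOZ : 4 * n 0 + n 1 + n 2 = 0 := by
      have h : ((4 * n 0 + n 1 + n 2 : ℤ) : ℚ) = 0 := by
        push_cast
        rw [← hn 0, ← hn 1, ← hn 2]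
        linarith
      exact_mod_cast h
    have hkey : n 0 = 0 ∧ n 1 + n 2 = 0 := by
      rcases hb 0 with h|h|h <;> rcases hb 1 with h1|h1|h1 <;> rcases hb 2 with h2|h2|h2 <;>
        omega
    obtain ⟨hk0, hk12⟩ := hkey
    set s := Finset.univ.filter (fun i => n i ≠ 0) with hsdef
    have hcard : s.card = 2 := by
      have e1 : ∑ i ∈ s, n i * n i = ∑ i, n i * n i :=
        Finset.sum_subset (Finset.subset_univ _) (fun k _ hk => by
          simp only [hsdef, Finset.mem_filter, Finset.mem_univ, true_and, not_not] at hk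
          rw [hk]; ring)
      have e2 : ∑ i ∈ s, n i * n i = ∑ _i ∈ s, (1:ℤ) :=
        Finset.sum_congr rfl (fun k hk => by
          simp only [hsdef, Finset.mem_filter, Finset.mem_univ, true_and] at hk
          rcases hb k with h|h|h
          · rw [h]; norm_num
          · exact absurd h hk
          · rw [h]; norm_num)
      have e4 : ∑ _i ∈ s, (1:ℤ) = (s.card : ℤ) := by simp
      have e3 : ((s.card : ℤ)) = 2 := by rw [← e4, ← e2, e1, hSZ]
      exact_mod_cast e3
    obtain ⟨i, j, hij, hs⟩ := Finset.card_eq_two.mp hcard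
    have hmem : ∀ k, n k ≠ 0 ↔ (k = i ∨ k = j) := by
      intro k
      constructor
      · intro hk
        have hks : k ∈ s := by simp [hsdef, hk]
        rw [hs] at hks
        simpa using hks
      · intro hk
        have hks : k ∈ s := by rw [hs]; simpa using hk
        simp only [hsdef, Finset.mem_filter, Finset.mem_univ, true_and] at hks
        exact hks
    rcases eq_or_ne (n 1) 0 with h1z | h1nz
    · -- pair case
      have h2z : n 2 = 0 := by omega
      have payload : ∀ a b : Fin 8, a < b → (∀ k, n k ≠ 0 ↔ (k = a ∨ k = b)) →
          (∃ i j : Fin 8, 3 ≤ (i : ℕ) ∧ i < j ∧ ∃ a b : ℚ,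
            (a = 1 ∨ a = -1) ∧ (b = 1 ∨ b = -1) ∧
              δ = a • stdBasis8 i + b • stdBasis8 j) ∨
            δ = stdBasis8 1 - stdBasis8 2 ∨ δ = stdBasis8 2 - stdBasis8 1 := by
        intro a b hab hm
        have hna : n a ≠ 0 := (hm a).mpr (Or.inl rfl)
        have hnb : n b ≠ 0 := (hm b).mpr (Or.inr rfl)
        left
        refine ⟨a, b, idx3 hk0 h1z h2z hna, hab, (n a : ℚ), (n b : ℚ), ?_, ?_, ?_⟩
        · rcases hb a with h|h|h
          · right; rw [h]; norm_num
          · exact absurd h hna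
          · left; rw [h]; norm_num
        · rcases hb b with h|h|h
          · right; rw [h]; norm_num
          · exact absurd h hnb
          · left; rw [h]; norm_num
        · funext k
          rw [hn k, pv_apply]
          rcases eq_or_ne k a with rfl | hka
          · simp [hab.ne]
          · rcases eq_or_ne k b with rfl | hkb
            · simp [hka]
            · have hz : n k = 0 := by
                by_contra hc
                rcases (hm k).mp hc with h|h
                · exact hka h
                · exact hkb h
              simp [hka, hkb, hz]
      rcases lt_trichotomy i j with hlt | heq | hgt
      · exact payload i j hlt hmem
      · exact absurd heq hij
      · exact payload j i hgt (fun k => (hmem k).trans or_comm)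
    · -- δ = ±(e₁ - e₂)
      have h2nz : n 2 ≠ 0 := by omega
      have hzk : ∀ k : Fin 8, k ≠ 1 → k ≠ 2 → n k = 0 := by
        intro k hk1 hk2
        by_contra hc
        rcases (hmem 1).mp h1nz with e1 | e1 <;> rcases (hmem 2).mp h2nz with e2 | e2 <;>
          rcases (hmem k).mp hc with e3 | e3 <;> simp_all [Fin.ext_iff]
      have e0 : n 0 = 0 := hk0
      have e3 : n 3 = 0 := hzk 3 (by decide) (by decide)
      have e4 : n 4 = 0 := hzk 4 (by decide) (by decide)
      have e5 : n 5 = 0 := hzk 5 (by decide) (by decide)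
      have e6 : n 6 = 0 := hzk 6 (by decide) (by decide)
      have e7 : n 7 = 0 := hzk 7 (by decide) (by decide)
      rcases hb 1 with h1v | h1v | h1v
      · -- n 1 = -1, n 2 = 1
        right; right
        have h2v : n 2 = 1 := by omega
        funext k
        have hv : (stdBasis8 2 - stdBasis8 1) k =
            (if k = 2 then 1 else 0) - (if k = 1 then 1 else 0) := rfl
        rw [hn k, hv]
        rcases eq_or_ne k 1 with rfl | hk1
        · norm_num [h1v, show ¬(1:Fin 8) = 2 from by decide]
        · rcases eq_or_ne k 2 with rfl | hk2
          · norm_num [h2v, show ¬(2:Fin 8) = 1 from by decide]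
          · simp [hk1, hk2, hzk k hk1 hk2]
      · exact absurd h1v h1nz
      · -- n 1 = 1, n 2 = -1
        right; left
        have h2v : n 2 = -1 := by omega
        funext k
        have hv : (stdBasis8 1 - stdBasis8 2) k =
            (if k = 1 then 1 else 0) - (if k = 2 then 1 else 0) := rfl
        rw [hn k, hv]
        rcases eq_or_ne k 1 with rfl | hk1
        · norm_num [h1v, show ¬(1:Fin 8) = 2 from by decide]
        · rcases eq_or_ne k 2 with rfl | hk2
          · norm_num [h2v, show ¬(2:Fin 8) = 1 from by decide]
          · simp [hk1, hk2, hzk k hk1 hk2]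
  · -- half-integral case: impossible
    exfalso
    choose n hn using hhalf
    have hlow : ∀ i, (1:ℚ)/4 ≤ δ i * δ i := by
      intro i
      have hz : (0:ℤ) ≤ n i * (n i + 1) := by nlinarith [sq_nonneg (2 * n i + 1)]
      have hzq : (0:ℚ) ≤ (n i : ℚ) * ((n i : ℚ) + 1) := by exact_mod_cast hz
      rw [hn i]
      nlinarith [hzq]
    have hsum14 : ∑ _i : Fin 8, (1:ℚ)/4 = 2 := by
      simp
      norm_num
    have heach := (Finset.sum_eq_sum_iff_of_le (fun i _ => hlow i)).mp
      (by rw [hS, hsum14])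
    have hpm : ∀ i, δ i = 1/2 ∨ δ i = -1/2 := by
      intro i
      have h14 : δ i * δ i = 1/4 := (heach i (Finset.mem_univ i)).symm
      have hfac : (δ i - 1/2) * (δ i + 1/2) = 0 := by nlinarith [h14]
      rcases mul_eq_zero.mp hfac with h | h
      · left; linarith
      · right; linarith
    rcases hpm 0 with h0|h0 <;> rcases hpm 1 with h1|h1 <;> rcases hpm 2 with h2|h2 <;>
      rw [h0, h1, h2] at hO <;> norm_num at hO

lemma exIntIf (c : Prop) [Decidable c] {a : ℚ} (ha : a = 1 ∨ a = -1) :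
    ∃ p : ℤ, (if c then a else 0) = (p : ℚ) := by
  split_ifs
  · rcases ha with rfl | rfl
    · exact ⟨1, by norm_num⟩
    · exact ⟨-1, by norm_num⟩
  · exact ⟨0, by norm_num⟩

lemma exIntAdd {u v : ℚ} (hu : ∃ p : ℤ, u = (p : ℚ)) (hv : ∃ q : ℤ, v = (q : ℚ)) :
    ∃ n : ℤ, u + v = (n : ℚ) := by
  obtain ⟨p, rfl⟩ := hu; obtain ⟨q, rfl⟩ := hv
  exact ⟨p + q, by push_cast; ring⟩

lemma exIntSub {u v : ℚ} (hu : ∃ p : ℤ, u = (p : ℚ)) (hv : ∃ q : ℤ, v = (q : ℚ)) :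
    ∃ n : ℤ, u - v = (n : ℚ) := by
  obtain ⟨p, rfl⟩ := hu; obtain ⟨q, rfl⟩ := hv
  exact ⟨p - q, by push_cast; ring⟩

lemma rev_pair {i j : Fin 8} (hi3 : 3 ≤ (i:ℕ)) (hij : i < j) {a b : ℚ}
    (ha : a = 1 ∨ a = -1) (hb : b = 1 ∨ b = -1) :
    IsE8Root (a • stdBasis8 i + b • stdBasis8 j) ∧
      e8Inner (a • stdBasis8 i + b • stdBasis8 j) (![4,1,1,0,0,0,0,0] : Fin 8 → ℚ) = 0 := by
  have hvi : (a • stdBasis8 i + b • stdBasis8 j) i = a := by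
    rw [pv_apply]; simp [hij.ne]
  have hvj : (a • stdBasis8 i + b • stdBasis8 j) j = b := by
    rw [pv_apply]; simp [hij.ne']
  have hz : ∀ k, k ≠ i → k ≠ j → (a • stdBasis8 i + b • stdBasis8 j) k = 0 := by
    intro k h1 h2; rw [pv_apply]; simp [h1, h2]
  refine ⟨⟨⟨Or.inl ?_, ?_⟩, ?_⟩, ?_⟩
  · intro k
    rw [pv_apply]
    exact exIntAdd (exIntIf _ ha) (exIntIf _ hb)
  · have hsum : ∑ k, (a • stdBasis8 i + b • stdBasis8 j) k = a + b := by
      rw [sum_support_pair _ hij.ne hz, hvi, hvj]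
    rcases ha with rfl|rfl <;> rcases hb with rfl|rfl
    exacts [⟨1, by rw [hsum]; norm_num⟩, ⟨0, by rw [hsum]; norm_num⟩,
      ⟨0, by rw [hsum]; norm_num⟩, ⟨-1, by rw [hsum]; norm_num⟩]
  · show e8Inner _ _ = -2
    rw [e8Inner,
      sum_support_pair _ hij.ne (fun k h1 h2 => by rw [hz k h1 h2, mul_zero]),
      hvi, hvj]
    rcases ha with rfl|rfl <;> rcases hb with rfl|rfl <;> norm_num
  · rw [e8Inner]
    have hzz : ∑ k, (a • stdBasis8 i + b • stdBasis8 j) k *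
        (![4,1,1,0,0,0,0,0] : Fin 8 → ℚ) k = 0 := by
      apply Finset.sum_eq_zero
      intro k _
      rcases eq_or_ne k i with rfl | hki
      · rw [vzero k hi3, mul_zero]
      · rcases eq_or_ne k j with rfl | hkj
        · rw [vzero k (le_of_lt (lt_of_le_of_lt hi3 hij)), mul_zero]
        · rw [hz k hki hkj, zero_mul]
    rw [hzz]
    norm_num

lemma fne01 : ¬(0:Fin 8) = 1 := by decide
lemma fne02 : ¬(0:Fin 8) = 2 := by decide
lemma fne12 : ¬(1:Fin 8) = 2 := by decide
lemma fne21 : ¬(2:Fin 8) = 1 := by decide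
lemma fne31 : ¬(3:Fin 8) = 1 := by decide
lemma fne32 : ¬(3:Fin 8) = 2 := by decide
lemma fne41 : ¬(4:Fin 8) = 1 := by decide
lemma fne42 : ¬(4:Fin 8) = 2 := by decide
lemma fne51 : ¬(5:Fin 8) = 1 := by decide
lemma fne52 : ¬(5:Fin 8) = 2 := by decide
lemma fne61 : ¬(6:Fin 8) = 1 := by decide
lemma fne62 : ¬(6:Fin 8) = 2 := by decide
lemma fne71 : ¬(7:Fin 8) = 1 := by decide
lemma fne72 : ¬(7:Fin 8) = 2 := by decide

lemma rev12 : IsE8Root (stdBasis8 1 - stdBasis8 2) ∧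
    e8Inner (stdBasis8 1 - stdBasis8 2) (![4,1,1,0,0,0,0,0] : Fin 8 → ℚ) = 0 := by
  have hv : ∀ k : Fin 8, (stdBasis8 1 - stdBasis8 2) k =
      (if k = 1 then 1 else 0) - (if k = 2 then 1 else 0) := fun k => rfl
  refine ⟨⟨⟨Or.inl ?_, ⟨0, ?_⟩⟩, ?_⟩, ?_⟩
  · intro k
    rw [hv k]
    exact exIntSub (exIntIf _ (Or.inl rfl)) (exIntIf _ (Or.inl rfl))
  · simp only [Fin.sum_univ_eight, hv]
    norm_num [fne01, fne02, fne12, fne21, fne31, fne32, fne41, fne42, fne51, fne52, fne61, fne62, fne71, fne72]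
  · rw [e8Inner, Fin.sum_univ_eight]
    simp only [hv]
    norm_num [fne01, fne02, fne12, fne21, fne31, fne32, fne41, fne42, fne51, fne52, fne61, fne62, fne71, fne72]
  · rw [e8Inner, Fin.sum_univ_eight, vA0, vA1, vA2, vA3, vA4, vA5, vA6, vA7]
    simp only [hv]
    norm_num [fne01, fne02, fne12, fne21, fne31, fne32, fne41, fne42, fne51, fne52, fne61, fne62, fne71, fne72]

lemma rev21 : IsE8Root (stdBasis8 2 - stdBasis8 1) ∧
    e8Inner (stdBasis8 2 - stdBasis8 1) (![4,1,1,0,0,0,0,0] : Fin 8 → ℚ) = 0 := by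
  have hv : ∀ k : Fin 8, (stdBasis8 2 - stdBasis8 1) k =
      (if k = 2 then 1 else 0) - (if k = 1 then 1 else 0) := fun k => rfl
  refine ⟨⟨⟨Or.inl ?_, ⟨0, ?_⟩⟩, ?_⟩, ?_⟩
  · intro k
    rw [hv k]
    exact exIntSub (exIntIf _ (Or.inl rfl)) (exIntIf _ (Or.inl rfl))
  · simp only [Fin.sum_univ_eight, hv]
    norm_num [fne01, fne02, fne12, fne21, fne31, fne32, fne41, fne42, fne51, fne52, fne61, fne62, fne71, fne72]
  · rw [e8Inner, Fin.sum_univ_eight]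
    simp only [hv]
    norm_num [fne01, fne02, fne12, fne21, fne31, fne32, fne41, fne42, fne51, fne52, fne61, fne62, fne71, fne72]
  · rw [e8Inner, Fin.sum_univ_eight, vA0, vA1, vA2, vA3, vA4, vA5, vA6, vA7]
    simp only [hv]
    norm_num [fne01, fne02, fne12, fne21, fne31, fne32, fne41, fne42, fne51, fne52, fne61, fne62, fne71, fne72]

lemma rhs_eq_F42 :
    ({δ : Fin 8 → ℚ | ∃ i j : Fin 8, 3 ≤ (i : ℕ) ∧ i < j ∧ ∃ a b : ℚ,
        (a = 1 ∨ a = -1) ∧ (b = 1 ∨ b = -1) ∧ δ = a • stdBasis8 i + b • stdBasis8 j} ∪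
      {stdBasis8 1 - stdBasis8 2, stdBasis8 2 - stdBasis8 1} : Set (Fin 8 → ℚ)) = ↑F42 := by
  ext δ
  simp only [Set.mem_union, Set.mem_setOf_eq, Set.mem_insert_iff, Set.mem_singleton_iff,
    F42, Finset.coe_union, Finset.mem_coe, Finset.mem_union, Finset.mem_image,
    Finset.mem_insert, Finset.mem_singleton, T8, Finset.mem_filter, Finset.mem_univ, true_and]
  constructor
  · rintro (⟨i, j, hi3, hij, a, b, ha, hb, rfl⟩ | h)
    · left
      rcases ha with rfl|rfl <;> rcases hb with rfl|rfl
      · exact ⟨(i, j, true, true), ⟨hi3, hij⟩, rfl⟩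
      · exact ⟨(i, j, true, false), ⟨hi3, hij⟩, rfl⟩
      · exact ⟨(i, j, false, true), ⟨hi3, hij⟩, rfl⟩
      · exact ⟨(i, j, false, false), ⟨hi3, hij⟩, rfl⟩
    · right; exact h
  · rintro (⟨⟨i, j, s, t⟩, ⟨hi3, hij⟩, rfl⟩ | h)
    · left
      exact ⟨i, j, hi3, hij, sgnQ s, sgnQ t, by cases s <;> norm_num [sgnQ],
        by cases t <;> norm_num [sgnQ], rfl⟩
    · right; exact h

/-- for `v = (4,1,1,0,…,0)`, a primitive vector of norm `-18` in E8, the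
roots of E8 orthogonal to `v` are exactly `±e_i ± e_j` with `4 ≤ i < j ≤ 8`
(0-based: `3 ≤ i < j ≤ 7`) together with `±(e_2 - e_3)` (0-based: `±(e_1 - e_2)`),
and there are exactly 42 of them. -/
theorem stmt_7 :
    inE8 (![4,1,1,0,0,0,0,0] : Fin 8 → ℚ) ∧
    IsPrimitiveInE8 (![4,1,1,0,0,0,0,0] : Fin 8 → ℚ) ∧
    e8Inner (![4,1,1,0,0,0,0,0] : Fin 8 → ℚ) (![4,1,1,0,0,0,0,0] : Fin 8 → ℚ) = -18 ∧
    ({δ : Fin 8 → ℚ | IsE8Root δ ∧ e8Inner δ (![4,1,1,0,0,0,0,0] : Fin 8 → ℚ) = 0} =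
      {δ : Fin 8 → ℚ | ∃ i j : Fin 8, 3 ≤ (i : ℕ) ∧ i < j ∧ ∃ a b : ℚ,
        (a = 1 ∨ a = -1) ∧ (b = 1 ∨ b = -1) ∧ δ = a • stdBasis8 i + b • stdBasis8 j} ∪
      {stdBasis8 1 - stdBasis8 2, stdBasis8 2 - stdBasis8 1}) ∧
    {δ : Fin 8 → ℚ | IsE8Root δ ∧ e8Inner δ (![4,1,1,0,0,0,0,0] : Fin 8 → ℚ) = 0}.ncard
      = 42 := by
  have hsets : {δ : Fin 8 → ℚ | IsE8Root δ ∧ e8Inner δ (![4,1,1,0,0,0,0,0] : Fin 8 → ℚ) = 0} =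
      {δ : Fin 8 → ℚ | ∃ i j : Fin 8, 3 ≤ (i : ℕ) ∧ i < j ∧ ∃ a b : ℚ,
        (a = 1 ∨ a = -1) ∧ (b = 1 ∨ b = -1) ∧ δ = a • stdBasis8 i + b • stdBasis8 j} ∪
      {stdBasis8 1 - stdBasis8 2, stdBasis8 2 - stdBasis8 1} := by
    ext δ
    simp only [Set.mem_union, Set.mem_setOf_eq, Set.mem_insert_iff, Set.mem_singleton_iff]
    constructor
    · rintro ⟨⟨h8, hn⟩, ho⟩
      exact forward h8 hn ho
    · rintro (⟨i, j, hi3, hij, a, b, ha, hb, rfl⟩ | rfl | rfl)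
      · exact rev_pair hi3 hij ha hb
      · exact rev12
      · exact rev21
  refine ⟨partA, partB, partC, hsets, ?_⟩
  rw [hsets, rhs_eq_F42, Set.ncard_coe_finset, F42_card]
end
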